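/- arXiv:math/9905109 — 3 statements merged into one kernel-verified Lean document; each statement's English description precedes it below -/
import Mathlib

section
/- Let P and Q be 2-dimensional lattice polygons in ℝ² with the same universal counting function. Then for every z ∈ ℤ² the lattice widths agree: w(z,P) = w(z,Q). -/
open MeasureTheory Set Pointwise

noncomputable section

/-- Euclidean space `ℝ^n`. -/
abbrev Euc (n : ℕ) := EuclideanSpace ℝ (Fin n)

/-- `x ∈ ℝ^n` is an integer (lattice) point, i.e. a point of `ℤ^n`. -/
def IsZ {n : ℕ} (x : Euc n) : Prop := ∀ i, ∃ m : ℤ, x i = (m : ℝ)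

/-- A lattice polytope: the convex hull of a (nonempty) finite set of points of `ℤ^n`. -/
def IsLatticePolytope {n : ℕ} (P : Set (Euc n)) : Prop :=
  ∃ S : Finset (Euc n), S.Nonempty ∧ (∀ x ∈ S, IsZ x) ∧ P = convexHull ℝ (S : Set (Euc n))

/-- `P` and `Q` have the same universal counting function:
`|π(P) ∩ ℤ^n| = |π(Q) ∩ ℤ^n|` for every injective linear `π : ℝ^n → ℝ^n`
with `π(ℤ^n) ⊆ ℤ^n`. -/
def SameUCF {n : ℕ} (P Q : Set (Euc n)) : Prop :=
  ∀ π : Euc n →ₗ[ℝ] Euc n, Function.Injective π → (∀ x, IsZ x → IsZ (π x)) →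
    Set.ncard {x | x ∈ π '' P ∧ IsZ x} = Set.ncard {x | x ∈ π '' Q ∧ IsZ x}

/-- The pairing `⟨z, x⟩` of `z ∈ ℤ^n` with `x ∈ ℝ^n`. -/
def dotZ {n : ℕ} (z : Fin n → ℤ) (x : Euc n) : ℝ := ∑ i, (z i : ℝ) * x i

/-- `z ∈ ℤ^n` is primitive: the gcd of its coordinates is 1. -/
def IsPrimitive {n : ℕ} (z : Fin n → ℤ) : Prop := Finset.univ.gcd z = 1

/-- The face `P(z)` of `P`: the set of points of `P` where the functional `⟨z, ·⟩`
attains its maximum over `P`. -/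
def polyFace {n : ℕ} (P : Set (Euc n)) (z : Fin n → ℤ) : Set (Euc n) :=
  {x ∈ P | ∀ y ∈ P, dotZ z y ≤ dotZ z x}

/-- The lattice width of `P` in direction `z ∈ ℤ^n`: `max {⟨z, x − y⟩ : x, y ∈ P}`. -/
def latticeWidth {n : ℕ} (z : Fin n → ℤ) (P : Set (Euc n)) : ℝ :=
  sSup {r | ∃ x ∈ P, ∃ y ∈ P, dotZ z x - dotZ z y = r}

/-!
For `z ≠ 0` let `π_N` be the integer matrix with rows `z` and `N • z⊥`. Lattice points of `π_N(P)`
correspond to the points `x ∈ P` whose coordinates `(⟨z, x⟩, ⟨z⊥, x⟩)` lie in `ℤ × N⁻¹ℤ`. In these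
coordinates `P` occupies the integer columns `m ∈ [a, b]`, where `b - a = w(z, P)`, and each column
is an interval whose endpoints are intersections of the line `{m} × ℝ` with segments between
lattice points, hence rationals with denominators at most `b - a`. So for `(b - a)! ∣ N` every
column contributes `N · (its length) + 1` points and `|π_N(P) ∩ ℤ²| = N · A + w(z, P) + 1`, with `A`
independent of `N`. Comparing `N = D` and `N = 2D` recovers `w(z, P)`.
-/

lemma exists_between_of_forall_le_of_bdd {α : Type*} [ConditionallyCompleteLattice α]
    {s t : Set α} (hs : BddAbove s) (ht : BddBelow t)
    (h : ∀ a ∈ s, ∀ b ∈ t, a ≤ b) : ∃ c, (∀ a ∈ s, a ≤ c) ∧ ∀ b ∈ t, c ≤ b := by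
  rcases s.eq_empty_or_nonempty with rfl | hs'
  · obtain ⟨c, hc⟩ := ht
    exact ⟨c, by simp, hc⟩
  · exact ⟨sSup s, fun a ha => le_csSup hs ha, fun b hb => csSup_le hs' fun a ha => h a ha b hb⟩

lemma isLeast_image_convexHull {E : Type*} [AddCommGroup E] [Module ℝ E] {s : Set E}
    (f : E →ₗ[ℝ] ℝ) {a : ℝ} (h : IsLeast (f '' s) a) : IsLeast (f '' convexHull ℝ s) a :=
  ⟨image_mono (subset_convexHull ℝ s) h.1, by
    rintro _ ⟨x, hx, rfl⟩
    exact convexHull_min (fun y hy => h.2 ⟨y, hy, rfl⟩) (convex_halfSpace_ge f.isLinear a) hx⟩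

lemma isGreatest_image_convexHull {E : Type*} [AddCommGroup E] [Module ℝ E] {s : Set E}
    (f : E →ₗ[ℝ] ℝ) {b : ℝ} (h : IsGreatest (f '' s) b) : IsGreatest (f '' convexHull ℝ s) b :=
  ⟨image_mono (subset_convexHull ℝ s) h.1, by
    rintro _ ⟨x, hx, rfl⟩
    exact convexHull_min (fun y hy => h.2 ⟨y, hy, rfl⟩) (convex_halfSpace_le f.isLinear b) hx⟩

lemma ncard_image_inter {α β : Type*} {f : α → β} (hf : Function.Injective f) (s : Set α)
    (t : Set β) : (f '' s ∩ t).ncard = (s ∩ f ⁻¹' t).ncard := by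
  rw [← image_inter_preimage, ncard_image_of_injective _ hf]

lemma Int.cast_card_Icc {R : Type*} [CommRing R] {k l : ℤ} (h : k ≤ l + 1) :
    ((Finset.Icc k l).card : R) = l - k + 1 := by
  rw [Int.card_Icc, ← Int.cast_natCast, Int.toNat_of_nonneg (by omega)]
  push_cast
  ring

lemma Int.cast_card_Icc_ceil_floor {K : Type*} [Field K] [LinearOrder K]
    [IsStrictOrderedRing K] [FloorRing K] {x y : K} (hx : ∃ k : ℤ, x = k) (hy : ∃ l : ℤ, y = l)
    (hxy : x ≤ y) : ((Finset.Icc ⌈x⌉ ⌊y⌋).card : K) = y - x + 1 := by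
  obtain ⟨k, rfl⟩ := hx
  obtain ⟨l, rfl⟩ := hy
  have : k ≤ l := by exact_mod_cast hxy
  rw [Int.ceil_intCast, Int.floor_intCast, Int.cast_card_Icc (by omega)]

lemma Int.mem_Icc_ceil_floor_iff {K : Type*} [Field K] [LinearOrder K] [IsStrictOrderedRing K]
    [FloorRing K] {N x y : K} (hN : 0 < N) (j : ℤ) :
    j ∈ Finset.Icc ⌈N * x⌉ ⌊N * y⌋ ↔ (j : K) / N ∈ Icc x y := by
  rw [Finset.mem_Icc, Int.ceil_le, Int.le_floor, mem_Icc, le_div_iff₀ hN, div_le_iff₀ hN,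
    mul_comm x, mul_comm y]

section Crossings

variable {E : Type*} [AddCommGroup E] [Module ℝ E] [DecidableEq E]
  {S : Finset E} {ℓ φ : E →ₗ[ℝ] ℝ} {c M : ℝ} {x y : E}

/-- The points where the segments between points of `S` meet the hyperplane `ℓ = c`. When
`ℓ p = ℓ q = c` the parameter is `0 / 0 = 0`, so the pair `(p, q)` contributes `p`. -/
def crossings (S : Finset E) (ℓ : E →ₗ[ℝ] ℝ) (c : ℝ) : Finset E :=
  ((S ×ˢ S).filter fun pq => ℓ pq.1 ≤ c ∧ c ≤ ℓ pq.2).image fun pq =>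
    AffineMap.lineMap pq.1 pq.2 ((c - ℓ pq.1) / (ℓ pq.2 - ℓ pq.1))

lemma mem_crossings : y ∈ crossings S ℓ c ↔ ∃ p ∈ S, ∃ q ∈ S, ℓ p ≤ c ∧ c ≤ ℓ q ∧
    AffineMap.lineMap p q ((c - ℓ p) / (ℓ q - ℓ p)) = y := by
  simp [crossings, and_assoc]

lemma crossings_nonempty {p q : E} (hp : p ∈ S) (hq : q ∈ S) (hpc : ℓ p ≤ c) (hcq : c ≤ ℓ q) :
    (crossings S ℓ c).Nonempty :=
  ⟨_, mem_crossings.2 ⟨p, hp, q, hq, hpc, hcq, rfl⟩⟩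

lemma mem_crossings_of_mem (hp : x ∈ S) (hc : ℓ x = c) : x ∈ crossings S ℓ c :=
  mem_crossings.2 ⟨x, hp, x, hp, hc.le, hc.ge, AffineMap.lineMap_same_apply _ _⟩

lemma mem_convexHull_of_mem_crossings (hy : y ∈ crossings S ℓ c) :
    y ∈ convexHull ℝ (S : Set E) ∧ ℓ y = c := by
  obtain ⟨p, hp, q, hq, hpc, hcq, rfl⟩ := mem_crossings.1 hy
  rcases eq_or_lt_of_le (hpc.trans hcq) with hpq | hpq
  · simp only [← hpq, sub_self, div_zero, AffineMap.lineMap_apply_zero]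
    exact ⟨subset_convexHull ℝ _ hp, le_antisymm hpc (hpq ▸ hcq)⟩
  have hden : 0 < ℓ q - ℓ p := sub_pos.2 hpq
  refine ⟨segment_subset_convexHull hp hq (lineMap_mem_segment ℝ _ _ ⟨?_, ?_⟩), ?_⟩
  · exact div_nonneg (by linarith) hden.le
  · exact div_le_one_of_le₀ (by linarith) hden.le
  · rw [AffineMap.lineMap_apply_module, map_add, map_smul, map_smul, smul_eq_mul, smul_eq_mul]
    field_simp
    ring

/- A crossing point of `[p, q]` with `ℓ p < c < ℓ q` lying below `M` says exactly that the lower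
bound on the slope `k` forced by `q` does not exceed the upper bound forced by `p`. -/
lemma exists_affine_majorant (hM : ∀ y ∈ crossings S ℓ c, φ y ≤ M) :
    ∃ k : ℝ, ∀ s ∈ S, φ s ≤ M + k * (ℓ s - c) := by
  have hcross : ∀ p ∈ S, ∀ q ∈ S, ℓ p < c → c < ℓ q →
      (φ q - M) / (ℓ q - c) ≤ (M - φ p) / (c - ℓ p) := by
    intro p hp q hq hpc hcq
    have h := hM _ (mem_crossings.2 ⟨p, hp, q, hq, hpc.le, hcq.le, rfl⟩)
    rw [AffineMap.lineMap_apply_module, map_add, map_smul, map_smul, smul_eq_mul,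
      smul_eq_mul] at h
    set t := (c - ℓ p) / (ℓ q - ℓ p)
    have hpq : 0 < ℓ q - ℓ p := by linarith
    have ht : t * (ℓ q - ℓ p) = c - ℓ p := div_mul_cancel₀ _ hpq.ne'
    have key : (ℓ q - ℓ p) * ((1 - t) * φ p + t * φ q) = (ℓ q - c) * φ p + (c - ℓ p) * φ q := by
      linear_combination (φ q - φ p) * ht
    have := mul_le_mul_of_nonneg_left h hpq.le
    rw [div_le_div_iff₀ (by linarith) (by linarith)]
    linarith
  obtain ⟨k, hk_above, hk_below⟩ := exists_between_of_forall_le_of_bdd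
    (s := (fun q => (φ q - M) / (ℓ q - c)) '' {q ∈ (S : Set E) | c < ℓ q})
    (t := (fun p => (M - φ p) / (c - ℓ p)) '' {p ∈ (S : Set E) | ℓ p < c})
    ((S.finite_toSet.subset (sep_subset _ _)).image _).bddAbove
    ((S.finite_toSet.subset (sep_subset _ _)).image _).bddBelow
    (by
      rintro _ ⟨q, ⟨hq, hcq⟩, rfl⟩ _ ⟨p, ⟨hp, hpc⟩, rfl⟩
      exact hcross p hp q hq hpc hcq)
  refine ⟨k, fun s hs => ?_⟩
  rcases lt_trichotomy (ℓ s) c with hsc | hsc | hsc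
  · have h := hk_below _ ⟨s, ⟨hs, hsc⟩, rfl⟩
    rw [le_div_iff₀ (by linarith)] at h
    linarith
  · have h := hM s (mem_crossings_of_mem hs hsc)
    rw [hsc, sub_self, mul_zero, add_zero]
    exact h
  · have h := hk_above _ ⟨s, ⟨hs, hsc⟩, rfl⟩
    rw [div_le_iff₀ (by linarith)] at h
    linarith

lemma le_of_forall_mem_crossings_le (hx : x ∈ convexHull ℝ (S : Set E))
    (hM : ∀ y ∈ crossings S ℓ (ℓ x), φ y ≤ M) : φ x ≤ M := by
  obtain ⟨k, hk⟩ := exists_affine_majorant hM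
  have hS : (S : Set E) ⊆ {y | (φ - k • ℓ) y ≤ M - k * ℓ x} := fun s hs => by
    simp only [mem_ofPred_eq, LinearMap.sub_apply, LinearMap.smul_apply, smul_eq_mul]
    linarith [hk s hs]
  have := convexHull_min hS (convex_halfSpace_le (φ - k • ℓ).isLinear _) hx
  simp only [mem_ofPred_eq, LinearMap.sub_apply, LinearMap.smul_apply, smul_eq_mul] at this
  linarith

theorem image_slice_eq_Icc (hC : (crossings S ℓ c).Nonempty) :
    φ '' {x ∈ convexHull ℝ (S : Set E) | ℓ x = c} =
      Icc (sInf (φ '' (crossings S ℓ c : Set E))) (sSup (φ '' (crossings S ℓ c : Set E))) := by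
  set V := φ '' (crossings S ℓ c : Set E)
  have hVfin : V.Finite := (crossings S ℓ c).finite_toSet.image _
  have hVne : V.Nonempty := (Finset.coe_nonempty.2 hC).image _
  have hV : V ⊆ φ '' {x ∈ convexHull ℝ (S : Set E) | ℓ x = c} :=
    image_mono fun y hy => mem_convexHull_of_mem_crossings hy
  refine Subset.antisymm ?_ ?_
  · rintro _ ⟨x, ⟨hx, rfl⟩, rfl⟩
    refine ⟨?_, le_of_forall_mem_crossings_le hx fun y hy => le_csSup hVfin.bddAbove ⟨y, hy, rfl⟩⟩
    have := le_of_forall_mem_crossings_le (φ := -φ) (M := -sInf V) hx fun y hy =>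
      neg_le_neg (csInf_le hVfin.bddBelow ⟨y, hy, rfl⟩)
    simpa using this
  · have hconv : Convex ℝ {x ∈ convexHull ℝ (S : Set E) | ℓ x = c} :=
      (convex_convexHull ℝ _).inter (convex_hyperplane ℓ.isLinear c)
    exact (hconv.linear_image φ).ordConnected.out (hV (hVne.csInf_mem hVfin))
      (hV (hVne.csSup_mem hVfin))

end Crossings

section Plane

variable {S : Finset (ℝ × ℝ)}

def crossingHeights (S : Finset (ℝ × ℝ)) (m : ℝ) : Set ℝ :=
  LinearMap.snd ℝ ℝ ℝ '' (crossings S (LinearMap.fst ℝ ℝ ℝ) m : Set (ℝ × ℝ))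

lemma crossings_fst_nonempty {a b m : ℝ} (ha : IsLeast (Prod.fst '' (S : Set (ℝ × ℝ))) a)
    (hb : IsGreatest (Prod.fst '' (S : Set (ℝ × ℝ))) b) (hm : m ∈ Icc a b) :
    (crossings S (LinearMap.fst ℝ ℝ ℝ) m).Nonempty := by
  obtain ⟨p, hp, rfl⟩ := ha.1
  obtain ⟨q, hq, rfl⟩ := hb.1
  exact crossings_nonempty hp hq hm.1 hm.2

lemma mk_mem_convexHull_iff {a b m t : ℝ} (ha : IsLeast (Prod.fst '' (S : Set (ℝ × ℝ))) a)
    (hb : IsGreatest (Prod.fst '' (S : Set (ℝ × ℝ))) b) :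
    (m, t) ∈ convexHull ℝ (S : Set (ℝ × ℝ)) ↔
      m ∈ Icc a b ∧ t ∈ Icc (sInf (crossingHeights S m)) (sSup (crossingHeights S m)) := by
  have hslice (hm : m ∈ Icc a b) : (m, t) ∈ convexHull ℝ (S : Set (ℝ × ℝ)) ↔
      t ∈ Icc (sInf (crossingHeights S m)) (sSup (crossingHeights S m)) := by
    rw [crossingHeights, ← image_slice_eq_Icc (crossings_fst_nonempty ha hb hm)]
    refine ⟨fun h => ⟨(m, t), ⟨h, rfl⟩, rfl⟩, ?_⟩
    rintro ⟨x, ⟨hx, rfl⟩, rfl⟩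
    exact hx
  refine ⟨fun h => ?_, fun ⟨hm, ht⟩ => (hslice hm).2 ht⟩
  have hm : m ∈ Icc a b :=
    ⟨(isLeast_image_convexHull (LinearMap.fst ℝ ℝ ℝ) ha).2 ⟨_, h, rfl⟩,
      (isGreatest_image_convexHull (LinearMap.fst ℝ ℝ ℝ) hb).2 ⟨_, h, rfl⟩⟩
  exact ⟨hm, (hslice hm).1 h⟩

lemma exists_int_eq_mul_of_mem_crossingHeights
    (hSZ : ∀ u ∈ S, (∃ i : ℤ, u.1 = i) ∧ ∃ j : ℤ, u.2 = j) {W : ℕ}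
    (hW : ∀ p ∈ S, ∀ q ∈ S, q.1 - p.1 ≤ W) {m : ℤ} {t : ℝ} (ht : t ∈ crossingHeights S m)
    {N : ℕ} (hN : W.factorial ∣ N) : ∃ k : ℤ, N * t = k := by
  obtain ⟨_, hy, rfl⟩ := ht
  obtain ⟨⟨_, _⟩, hp, ⟨_, _⟩, hq, hpm, hmq, rfl⟩ := mem_crossings.1 hy
  obtain ⟨⟨p₁, rfl⟩, ⟨p₂, rfl⟩⟩ := hSZ _ hp
  obtain ⟨⟨q₁, rfl⟩, ⟨q₂, rfl⟩⟩ := hSZ _ hq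
  have hW' : (q₁ - p₁ : ℝ) ≤ W := hW _ hp _ hq
  simp only [LinearMap.fst_apply, Int.cast_le] at hpm hmq
  simp only [LinearMap.fst_apply, LinearMap.snd_apply, AffineMap.lineMap_apply_module,
    Prod.snd_add, Prod.smul_snd, smul_eq_mul]
  rcases eq_or_lt_of_le (hpm.trans hmq) with hpq | hpq
  · refine ⟨N * p₂, ?_⟩
    rw [hpq, sub_self, div_zero]
    push_cast
    ring
  · have hd : (q₁ - p₁).toNat ∣ W.factorial := Nat.dvd_factorial (by omega) (by
      have : (q₁ - p₁ : ℤ) ≤ W := by exact_mod_cast hW'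
      omega)
    obtain ⟨e, he⟩ := hd.trans hN
    refine ⟨e * ((q₁ - p₁) * p₂ + (m - p₁) * (q₂ - p₂)), ?_⟩
    have hNe : (N : ℝ) = (q₁ - p₁ : ℤ) * e := by
      rw [he, Nat.cast_mul, ← Int.cast_natCast (q₁ - p₁).toNat, Int.toNat_of_nonneg (by omega)]
    have hne : (q₁ : ℝ) - p₁ ≠ 0 := sub_ne_zero.2 (by exact_mod_cast hpq.ne')
    rw [hNe]
    push_cast
    field_simp
    ring

def columnLattice (N : ℕ) : Set (ℝ × ℝ) := {u | (∃ m : ℤ, u.1 = m) ∧ ∃ j : ℤ, N * u.2 = j}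

theorem ncard_inter_columnLattice {K : Set (ℝ × ℝ)} {a b : ℤ} {lo hi : ℤ → ℝ}
    (hK : ∀ (m : ℤ) (t : ℝ), ((m : ℝ), t) ∈ K ↔ m ∈ Finset.Icc a b ∧ t ∈ Icc (lo m) (hi m))
    {N : ℕ} (hN : 0 < N) :
    (K ∩ columnLattice N).ncard =
      ∑ m ∈ Finset.Icc a b, (Finset.Icc ⌈N * lo m⌉ ⌊N * hi m⌋).card := by
  have hNR : (0 : ℝ) < N := Nat.cast_pos.2 hN
  set g : (Σ _ : ℤ, ℤ) → ℝ × ℝ := fun x => ((x.1 : ℝ), (x.2 : ℝ) / N)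
  have hg : Function.Injective g := by
    rintro ⟨m, j⟩ ⟨m', j'⟩ h
    simp only [g, Prod.mk.injEq, Int.cast_inj, div_left_inj' hNR.ne'] at h
    rw [h.1, h.2]
  have hset : K ∩ columnLattice N =
      g '' ((Finset.Icc a b).sigma fun m => Finset.Icc ⌈N * lo m⌉ ⌊N * hi m⌋ : Finset _) := by
    ext ⟨u, v⟩
    simp only [columnLattice, mem_inter_iff, mem_ofPred_eq, Finset.coe_sigma, mem_image,
      mem_sigma_iff, Finset.mem_coe, Int.mem_Icc_ceil_floor_iff hNR, g, Sigma.exists,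
      Prod.mk.injEq]
    constructor
    · rintro ⟨hK', ⟨m, rfl⟩, j, hj⟩
      have hv : v = j / N := by rw [← hj, mul_div_cancel_left₀ _ hNR.ne']
      subst hv
      exact ⟨m, j, (hK m _).1 hK', rfl, rfl⟩
    · rintro ⟨m, j, hmj, rfl, rfl⟩
      exact ⟨(hK m _).2 hmj, ⟨m, rfl⟩, j, mul_div_cancel₀ _ hNR.ne'⟩
  rw [hset, ncard_image_of_injective _ hg, ncard_coe_finset, Finset.card_sigma]

theorem exists_ncard_convexHull_inter_columnLattice
    (hSZ : ∀ u ∈ S, (∃ i : ℤ, u.1 = i) ∧ ∃ j : ℤ, u.2 = j) {a b : ℤ}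
    (ha : IsLeast (Prod.fst '' (S : Set (ℝ × ℝ))) a)
    (hb : IsGreatest (Prod.fst '' (S : Set (ℝ × ℝ))) b) :
    ∃ A : ℝ, ∀ N : ℕ, 0 < N → (b - a).toNat.factorial ∣ N →
      ((convexHull ℝ (S : Set (ℝ × ℝ)) ∩ columnLattice N).ncard : ℝ) = N * A + (b - a + 1) := by
  set lo := fun m : ℤ => sInf (crossingHeights S m)
  set hi := fun m : ℤ => sSup (crossingHeights S m)
  have hab : a ≤ b := by exact_mod_cast ha.2 hb.1
  have hW : ∀ p ∈ S, ∀ q ∈ S, q.1 - p.1 ≤ ((b - a).toNat : ℕ) := by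
    intro p hp q hq
    rw [← Int.cast_natCast, Int.toNat_of_nonneg (by omega), Int.cast_sub]
    linarith [ha.2 ⟨p, hp, rfl⟩, hb.2 ⟨q, hq, rfl⟩]
  refine ⟨∑ m ∈ Finset.Icc a b, (hi m - lo m), fun N hN hD => ?_⟩
  have hK : ∀ (m : ℤ) (t : ℝ), ((m : ℝ), t) ∈ convexHull ℝ (S : Set (ℝ × ℝ)) ↔
      m ∈ Finset.Icc a b ∧ t ∈ Icc (lo m) (hi m) := by
    intro m t
    rw [mk_mem_convexHull_iff ha hb, Finset.mem_Icc, mem_Icc, Int.cast_le, Int.cast_le]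
  have hcard : ∀ m ∈ Finset.Icc a b,
      ((Finset.Icc ⌈N * lo m⌉ ⌊N * hi m⌋).card : ℝ) = N * (hi m - lo m) + 1 := by
    intro m hm
    have hne : (crossingHeights S m).Nonempty :=
      (Finset.coe_nonempty.2 (crossings_fst_nonempty ha hb
        (by simpa using hm))).image _
    have hfin : (crossingHeights S m).Finite := (Finset.finite_toSet _).image _
    rw [Int.cast_card_Icc_ceil_floor
      (exists_int_eq_mul_of_mem_crossingHeights hSZ hW (hne.csInf_mem hfin) hD)
      (exists_int_eq_mul_of_mem_crossingHeights hSZ hW (hne.csSup_mem hfin) hD)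
      (mul_le_mul_of_nonneg_left (csInf_le_csSup hne hfin.bddBelow hfin.bddAbove)
        (Nat.cast_nonneg N)), mul_sub]
  rw [ncard_inter_columnLattice hK hN, Nat.cast_sum, Finset.sum_congr rfl hcard,
    Finset.sum_add_distrib, ← Finset.mul_sum, Finset.sum_const, nsmul_one,
    Int.cast_card_Icc (by omega)]

end Plane

section Lattice

variable {n : ℕ}

def dotL (z : Fin n → ℤ) : Euc n →ₗ[ℝ] ℝ where
  toFun := dotZ z
  map_add' x y := by simp only [dotZ, PiLp.add_apply, mul_add, Finset.sum_add_distrib]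
  map_smul' r x := by
    simp only [dotZ, PiLp.smul_apply, smul_eq_mul, RingHom.id_apply, Finset.mul_sum]
    exact Finset.sum_congr rfl fun i _ => mul_left_comm _ _ _

@[simp] lemma dotL_apply (z : Fin n → ℤ) (x : Euc n) : dotL z x = dotZ z x := rfl

lemma exists_int_dotZ_eq (z : Fin n → ℤ) {x : Euc n} (hx : IsZ x) : ∃ k : ℤ, dotZ z x = k := by
  choose k hk using hx
  exact ⟨∑ i, z i * k i, by simp [dotZ, hk]⟩

lemma exists_isLeast_dotZ_image (z : Fin n → ℤ) {S : Finset (Euc n)} (hS : S.Nonempty)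
    (hSZ : ∀ x ∈ S, IsZ x) : ∃ a : ℤ, IsLeast (dotZ z '' (S : Set (Euc n))) a := by
  obtain ⟨p, hp, hpmin⟩ := S.exists_min_image (dotZ z) hS
  obtain ⟨a, ha⟩ := exists_int_dotZ_eq z (hSZ p hp)
  exact ⟨a, ⟨p, hp, ha⟩, by rintro _ ⟨x, hx, rfl⟩; exact ha ▸ hpmin x hx⟩

lemma exists_isGreatest_dotZ_image (z : Fin n → ℤ) {S : Finset (Euc n)} (hS : S.Nonempty)
    (hSZ : ∀ x ∈ S, IsZ x) : ∃ b : ℤ, IsGreatest (dotZ z '' (S : Set (Euc n))) b := by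
  obtain ⟨q, hq, hqmax⟩ := S.exists_max_image (dotZ z) hS
  obtain ⟨b, hb⟩ := exists_int_dotZ_eq z (hSZ q hq)
  exact ⟨b, ⟨q, hq, hb⟩, by rintro _ ⟨x, hx, rfl⟩; exact hb ▸ hqmax x hx⟩

lemma latticeWidth_eq_sub {z : Fin n → ℤ} {P : Set (Euc n)} {a b : ℝ}
    (ha : IsLeast (dotZ z '' P) a) (hb : IsGreatest (dotZ z '' P) b) :
    latticeWidth z P = b - a := by
  refine IsGreatest.csSup_eq ⟨?_, ?_⟩
  · obtain ⟨x, hx, hxb⟩ := hb.1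
    obtain ⟨y, hy, hya⟩ := ha.1
    exact ⟨x, hx, y, hy, by rw [hxb, hya]⟩
  · rintro _ ⟨x, hx, y, hy, rfl⟩
    linarith [hb.2 ⟨x, hx, rfl⟩, ha.2 ⟨y, hy, rfl⟩]

lemma latticeWidth_zero {P : Set (Euc n)} (hP : P.Nonempty) : latticeWidth 0 P = 0 := by
  have h : dotZ (0 : Fin n → ℤ) '' P = {0} := by
    rw [show dotZ (0 : Fin n → ℤ) = fun _ => 0 from funext fun x => by simp [dotZ],
      hP.image_const]
  rw [latticeWidth_eq_sub (h ▸ isLeast_singleton) (h ▸ isGreatest_singleton), sub_self]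

end Lattice

section AdaptedCoords

variable {z : Fin 2 → ℤ} {N : ℕ}

def perp (z : Fin 2 → ℤ) : Fin 2 → ℤ := ![-z 1, z 0]

def adaptedCoords (z : Fin 2 → ℤ) : Euc 2 →ₗ[ℝ] ℝ × ℝ := (dotL z).prod (dotL (perp z))

/- The matrix `[[z₀, z₁], [-N z₁, N z₀]]`, i.e. `adaptedCoords z` followed by `diag(1, N)`. -/
def countingMap (z : Fin 2 → ℤ) (N : ℕ) : Euc 2 →ₗ[ℝ] Euc 2 :=
  (WithLp.linearEquiv 2 ℝ (Fin 2 → ℝ)).symm.toLinearMap ∘ₗ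
    LinearMap.pi ![dotL z, (N : ℝ) • dotL (perp z)]

lemma adaptedCoords_apply (x : Euc 2) :
    adaptedCoords z x = (z 0 * x 0 + z 1 * x 1, -z 1 * x 0 + z 0 * x 1) := by
  simp [adaptedCoords, dotZ, perp, Fin.sum_univ_two]

lemma adaptedCoords_injective (hz : z ≠ 0) : Function.Injective (adaptedCoords z) := by
  rw [← LinearMap.ker_eq_bot, LinearMap.ker_eq_bot']
  intro x hx
  rw [adaptedCoords_apply, Prod.mk_eq_zero] at hx
  obtain ⟨h₀, h₁⟩ := hx
  have hnorm : (z 0 : ℝ) ^ 2 + (z 1 : ℝ) ^ 2 ≠ 0 := by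
    have : z 0 ≠ 0 ∨ z 1 ≠ 0 := by
      contrapose! hz
      ext i
      fin_cases i <;> simp [hz.1, hz.2]
    rcases this with h | h <;> positivity
  have e₀ : x 0 = 0 := (mul_eq_zero.1 (by linear_combination z 0 * h₀ - z 1 * h₁ :
    ((z 0 : ℝ) ^ 2 + (z 1 : ℝ) ^ 2) * x 0 = 0)).resolve_left hnorm
  have e₁ : x 1 = 0 := (mul_eq_zero.1 (by linear_combination z 1 * h₀ + z 0 * h₁ :
    ((z 0 : ℝ) ^ 2 + (z 1 : ℝ) ^ 2) * x 1 = 0)).resolve_left hnorm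
  ext i
  fin_cases i <;> simp [e₀, e₁]

lemma countingMap_apply_zero (x : Euc 2) : countingMap z N x 0 = (adaptedCoords z x).1 := rfl

lemma countingMap_apply_one (x : Euc 2) : countingMap z N x 1 = N * (adaptedCoords z x).2 := rfl

lemma isZ_countingMap_iff {x : Euc 2} :
    IsZ (countingMap z N x) ↔ adaptedCoords z x ∈ columnLattice N := by
  simp only [IsZ, Fin.forall_fin_two, countingMap_apply_zero, countingMap_apply_one, columnLattice,
    mem_ofPred_eq]

lemma isZ_countingMap {x : Euc 2} (hx : IsZ x) : IsZ (countingMap z N x) := by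
  obtain ⟨k, hk⟩ := exists_int_dotZ_eq (perp z) hx
  refine isZ_countingMap_iff.2 ⟨exists_int_dotZ_eq z hx, N * k, ?_⟩
  change (N : ℝ) * dotZ (perp z) x = _
  rw [hk]
  push_cast
  rfl

lemma countingMap_injective (hz : z ≠ 0) (hN : N ≠ 0) : Function.Injective (countingMap z N) := by
  intro x y h
  apply adaptedCoords_injective hz
  have h₀ := congrArg (· 0) h
  have h₁ := congrArg (· 1) h
  simp only [countingMap_apply_zero, countingMap_apply_one] at h₀ h₁
  exact Prod.ext h₀ (mul_left_cancel₀ (Nat.cast_ne_zero.2 hN) h₁)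

lemma ncard_countingMap_image_eq (hz : z ≠ 0) (hN : N ≠ 0) (P : Set (Euc 2)) :
    {y | y ∈ countingMap z N '' P ∧ IsZ y}.ncard =
      (adaptedCoords z '' P ∩ columnLattice N).ncard := by
  rw [ncard_image_inter (adaptedCoords_injective hz)]
  change (countingMap z N '' P ∩ {y | IsZ y}).ncard = _
  rw [ncard_image_inter (countingMap_injective hz hN)]
  congr 1
  ext x
  simp only [mem_inter_iff, mem_preimage, mem_ofPred_eq, isZ_countingMap_iff]

end AdaptedCoords

theorem exists_ncard_countingMap_image_eq {z : Fin 2 → ℤ} (hz : z ≠ 0) {S : Finset (Euc 2)}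
    (hS : S.Nonempty) (hSZ : ∀ x ∈ S, IsZ x) :
    ∃ A : ℝ, ∃ D : ℕ, 0 < D ∧ ∀ N : ℕ, 0 < N → D ∣ N →
      ({y | y ∈ countingMap z N '' convexHull ℝ (S : Set (Euc 2)) ∧ IsZ y}.ncard : ℝ) =
        N * A + (latticeWidth z (convexHull ℝ (S : Set (Euc 2))) + 1) := by
  obtain ⟨a, hmin⟩ := exists_isLeast_dotZ_image z hS hSZ
  obtain ⟨b, hmax⟩ := exists_isGreatest_dotZ_image z hS hSZ
  have hfst : Prod.fst '' ((S.image (adaptedCoords z) : Finset (ℝ × ℝ)) : Set (ℝ × ℝ)) =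
      dotZ z '' (S : Set (Euc 2)) := by
    rw [Finset.coe_image, image_image]
    rfl
  have hS'Z : ∀ u ∈ S.image (adaptedCoords z), (∃ i : ℤ, u.1 = i) ∧ ∃ j : ℤ, u.2 = j := by
    simp only [Finset.mem_image]
    rintro _ ⟨x, hx, rfl⟩
    exact ⟨exists_int_dotZ_eq z (hSZ x hx), exists_int_dotZ_eq (perp z) (hSZ x hx)⟩
  obtain ⟨A, hA⟩ :=
    exists_ncard_convexHull_inter_columnLattice hS'Z (hfst ▸ hmin) (hfst ▸ hmax)
  refine ⟨A, (b - a).toNat.factorial, Nat.factorial_pos _, fun N hN hD => ?_⟩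
  rw [ncard_countingMap_image_eq hz hN.ne', LinearMap.image_convexHull, ← Finset.coe_image,
    hA N hN hD, latticeWidth_eq_sub (isLeast_image_convexHull (dotL z) hmin)
      (isGreatest_image_convexHull (dotL z) hmax)]

theorem statement5_general (P Q : Set (Euc 2))
    (hP : IsLatticePolytope P) (hQ : IsLatticePolytope Q)
    (hUCF : SameUCF P Q) :
    ∀ z : Fin 2 → ℤ, latticeWidth z P = latticeWidth z Q := by
  intro z
  obtain ⟨S, hS, hSZ, rfl⟩ := hP
  obtain ⟨T, hT, hTZ, rfl⟩ := hQ
  rcases eq_or_ne z 0 with rfl | hz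
  · rw [latticeWidth_zero ((Finset.coe_nonempty.2 hS).mono (subset_convexHull ℝ _)),
      latticeWidth_zero ((Finset.coe_nonempty.2 hT).mono (subset_convexHull ℝ _))]
  obtain ⟨A, D, hD, hcountP⟩ := exists_ncard_countingMap_image_eq hz hS hSZ
  obtain ⟨B, D', hD', hcountQ⟩ := exists_ncard_countingMap_image_eq hz hT hTZ
  have key : ∀ N : ℕ, 0 < N → D ∣ N → D' ∣ N →
      (N : ℝ) * A + (latticeWidth z (convexHull ℝ ↑S) + 1) =
        N * B + (latticeWidth z (convexHull ℝ ↑T) + 1) := fun N hN hDN hD'N => by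
    rw [← hcountP N hN hDN, ← hcountQ N hN hD'N,
      hUCF _ (countingMap_injective hz hN.ne') fun _ => isZ_countingMap]
  have h₁ := key (D * D') (by positivity) (dvd_mul_right _ _) (dvd_mul_left _ _)
  have h₂ := key (2 * (D * D')) (by positivity) ((dvd_mul_right _ _).mul_left 2)
    ((dvd_mul_left _ _).mul_left 2)
  push_cast at h₁ h₂
  linear_combination 2 * h₁ - h₂

/-- Corollary 2: 2-dimensional lattice polygons with the same universal counting
function have the same lattice width in every direction `z ∈ ℤ²`. -/
theorem statement5 (P Q : Set (Euc 2))
    (hP : IsLatticePolytope P) (hQ : IsLatticePolytope Q)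
    (hPdim : (interior P).Nonempty) (hQdim : (interior Q).Nonempty)
    (hUCF : SameUCF P Q) :
    ∀ z : Fin 2 → ℤ, latticeWidth z P = latticeWidth z Q :=
  statement5_general P Q hP hQ hUCF
end
end

section
/- Let P, Q, P', Q' be 2-dimensional lattice polygons in ℝ² and t ∈ ℤ² a nonzero vector such that P = P' + [0,t] and Q = Q' + [0,t], where [0,t] is the segment from the origin to t and + denotes Minkowski addition. If P and Q have the same universal counting function, then P' and Q' have the same universal counting function. -/
open MeasureTheory Set Pointwise

noncomputable section

/-!
Fix an admissible `π`. A lattice automorphism `Ψ` carries `π t` to `(g, 0)`, so in the coordinates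
`Ψ` the images of `P` and `Q` are `W_P + [0, (g, 0)]` and `W_Q + [0, (g, 0)]` for lattice polygons
`W_P`, `W_Q`. Composing `π` with the stretches `(x, y) ↦ (N x, y)` (read in these coordinates)
keeps it admissible, so the two sums have equally many points in `(ℤ/N) × ℤ` for every `N ≥ 1`.
Counting row by row, the segment adds `N g` points to each integer row met by `W`; and since the
rows of a lattice polygon have rational endpoints, the count for `W` alone is exactly
`ℓ N + (number of rows met)` once `N` clears all denominators. Comparing `N = d` and `N = 2d`
shows that `W_P` and `W_Q` meet equally many rows, and then `N = 1` gives the claim.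
-/

namespace LatticeRows

def IsIntPt (p : ℝ × ℝ) : Prop := ∃ m k : ℤ, p = ((m : ℝ), (k : ℝ))

def row (W : Set (ℝ × ℝ)) (c : ℝ) : Set ℝ := (fun r => (r, c)) ⁻¹' W

def rowCount (R : Set ℝ) (N : ℕ) : ℕ := {m : ℤ | (m : ℝ) / N ∈ R}.ncard

/-- The number of lattice points of the stretched set `{(N x, y) | (x, y) ∈ W}`. -/
def scaledCount (W : Set (ℝ × ℝ)) (N : ℕ) : ℕ :=
  {p : ℤ × ℤ | ((p.1 : ℝ) / N, (p.2 : ℝ)) ∈ W}.ncard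

def rowsMet (W : Set (ℝ × ℝ)) : ℕ := {c : ℤ | (row W c).Nonempty}.ncard

lemma setOf_div_mem_Icc {N : ℕ} (hN : 0 < N) (a b : ℝ) :
    {m : ℤ | (m : ℝ) / N ∈ Icc a b} = ↑(Finset.Icc ⌈N * a⌉ ⌊N * b⌋) := by
  have hN' : (0 : ℝ) < N := by exact_mod_cast hN
  ext m
  simp only [mem_ofPred_eq, mem_Icc, Finset.coe_Icc, Int.ceil_le, Int.le_floor, le_div_iff₀ hN',
    div_le_iff₀ hN', mul_comm (N : ℝ)]

lemma rowCount_Icc {N : ℕ} (hN : 0 < N) (a b : ℝ) :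
    rowCount (Icc a b) N = (⌊N * b⌋ + 1 - ⌈N * a⌉).toNat := by
  rw [rowCount, setOf_div_mem_Icc hN, ncard_coe_finset, Int.card_Icc]

lemma rowCount_Icc_add_Icc {N : ℕ} (hN : 0 < N) {a b : ℝ} (hab : a ≤ b) (g : ℕ) :
    rowCount (Icc a b + Icc 0 (g : ℝ)) N = rowCount (Icc a b) N + N * g := by
  have hfloor : ⌊(N : ℝ) * (b + g)⌋ = ⌊N * b⌋ + (N * g : ℕ) := by
    rw [← Int.floor_add_natCast]; push_cast; ring_nf
  have hnonneg : 0 ≤ ⌊(N : ℝ) * b⌋ + 1 - ⌈(N : ℝ) * a⌉ := by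
    have := Int.ceil_le_ceil (mul_le_mul_of_nonneg_left hab (Nat.cast_nonneg N))
    linarith [Int.ceil_le_floor_add_one ((N : ℝ) * b)]
  rw [Icc_add_Icc hab (Nat.cast_nonneg g), add_zero, rowCount_Icc hN, rowCount_Icc hN, hfloor,
    add_right_comm, add_sub_right_comm, Int.toNat_add_nat hnonneg]

lemma exists_intCast_eq_mul_of_den_dvd {q : ℚ} {N : ℕ} (h : q.den ∣ N) :
    ∃ z : ℤ, (N : ℚ) * q = z := by
  obtain ⟨e, rfl⟩ := h
  refine ⟨e * q.num, ?_⟩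
  push_cast
  rw [← Rat.mul_den_eq_num]
  ring

lemma finite_setOf_div_mem_Icc {N : ℕ} (hN : 0 < N) (a b : ℝ) :
    {m : ℤ | (m : ℝ) / N ∈ Icc a b}.Finite :=
  setOf_div_mem_Icc hN a b ▸ Finset.finite_toSet _

def IsAffineOnMultiples (f : ℕ → ℚ) (h : ℚ) : Prop :=
  ∃ d > 0, ∃ ℓ : ℚ, ∀ N, 0 < N → d ∣ N → f N = N * ℓ + h

lemma isAffineOnMultiples_rowCount_Icc {a b : ℚ} (hab : a ≤ b) :
    IsAffineOnMultiples (fun N => rowCount (Icc (a : ℝ) b) N) 1 := by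
  refine ⟨a.den * b.den, by positivity, b - a, fun N hN hd => ?_⟩
  obtain ⟨za, hza⟩ := exists_intCast_eq_mul_of_den_dvd (dvd_trans (dvd_mul_right _ _) hd)
  obtain ⟨zb, hzb⟩ := exists_intCast_eq_mul_of_den_dvd (dvd_trans (dvd_mul_left _ _) hd)
  have hz : za ≤ zb := by
    have := mul_le_mul_of_nonneg_left hab (Nat.cast_nonneg (α := ℚ) N)
    rw [hza, hzb] at this
    exact_mod_cast this
  have hza' : (N : ℝ) * a = za := by exact_mod_cast hza
  have hzb' : (N : ℝ) * b = zb := by exact_mod_cast hzb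
  dsimp only
  rw [rowCount_Icc hN, hza', hzb', Int.floor_intCast, Int.ceil_intCast, ← Int.cast_natCast,
    Int.toNat_of_nonneg (by omega)]
  push_cast
  rw [mul_sub, hza, hzb]
  ring

lemma IsAffineOnMultiples.sum {ι : Type*} (s : Finset ι) {f : ι → ℕ → ℚ} {h : ι → ℚ}
    (hf : ∀ i ∈ s, IsAffineOnMultiples (f i) (h i)) {F : ℕ → ℚ}
    (hF : ∀ N, 0 < N → F N = ∑ i ∈ s, f i N) :
    IsAffineOnMultiples F (∑ i ∈ s, h i) := by
  classical
  induction s using Finset.induction_on generalizing F with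
  | empty => exact ⟨1, one_pos, 0, fun N hN _ => by simp [hF N hN]⟩
  | insert i s hi ih =>
    obtain ⟨d₁, hd₁, ℓ₁, h₁⟩ := hf i (Finset.mem_insert_self i s)
    obtain ⟨d₂, hd₂, ℓ₂, h₂⟩ := ih (F := fun N => ∑ j ∈ s, f j N)
      (fun j hj => hf j (Finset.mem_insert_of_mem hj)) (fun _ _ => rfl)
    refine ⟨d₁ * d₂, by positivity, ℓ₁ + ℓ₂, fun N hN hd => ?_⟩
    rw [hF N hN, Finset.sum_insert hi, Finset.sum_insert hi,
      h₁ N hN (dvd_trans (dvd_mul_right _ _) hd)]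
    have := h₂ N hN (dvd_trans (dvd_mul_left _ _) hd)
    dsimp only at this
    rw [this]
    ring

lemma IsAffineOnMultiples.apply_one_eq {f g : ℕ → ℚ} {a b : ℚ} (hf : IsAffineOnMultiples f a)
    (hg : IsAffineOnMultiples g b) (c : ℚ)
    (hfg : ∀ N : ℕ, 0 < N → f N + a * (N * c) = g N + b * (N * c)) : f 1 = g 1 := by
  obtain ⟨d₁, hd₁, ℓ₁, h₁⟩ := hf
  obtain ⟨d₂, hd₂, ℓ₂, h₂⟩ := hg
  have hd : 0 < d₁ * d₂ := by positivity
  have e₁ := hfg (d₁ * d₂) hd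
  have e₂ := hfg (2 * (d₁ * d₂)) (by positivity)
  rw [h₁ _ hd (dvd_mul_right _ _), h₂ _ hd (dvd_mul_left _ _)] at e₁
  rw [h₁ _ (by positivity) (dvd_mul_of_dvd_right (dvd_mul_right _ _) 2),
    h₂ _ (by positivity) (dvd_mul_of_dvd_right (dvd_mul_left _ _) 2)] at e₂
  have hab : a = b := by push_cast at e₁ e₂; linear_combination 2 * e₁ - e₂
  simpa [hab] using hfg 1 one_pos

lemma scaledCount_eq_sum_rowCount {W : Set (ℝ × ℝ)} {N : ℕ} (S : Finset ℤ)
    (hS : ∀ c : ℤ, (row W c).Nonempty → c ∈ S)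
    (hfin : ∀ c ∈ S, {m : ℤ | (m : ℝ) / N ∈ row W c}.Finite) :
    scaledCount W N = ∑ c ∈ S, rowCount (row W c) N := by
  have hunion : {p : ℤ × ℤ | ((p.1 : ℝ) / N, (p.2 : ℝ)) ∈ W}
      = ⋃ c ∈ (S : Set ℤ), (fun m => (m, c)) '' {m : ℤ | (m : ℝ) / N ∈ row W c} := by
    ext ⟨m, k⟩
    simp only [mem_ofPred_eq, mem_iUnion, mem_image, Prod.mk.injEq, Finset.mem_coe]
    constructor
    · intro h
      exact ⟨k, hS k ⟨_, h⟩, m, h, rfl, rfl⟩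
    · rintro ⟨c, -, m, h, rfl, rfl⟩
      exact h
  rw [scaledCount, hunion, S.finite_toSet.ncard_biUnion (fun c hc => (hfin c hc).image _),
    finsum_mem_coe_finset]
  · refine Finset.sum_congr rfl fun c _ => ?_
    exact ncard_image_of_injective _ fun m m' h => (Prod.mk.inj h).1
  · intro c _ c' _ hcc'
    simp only [Function.onFun, disjoint_left, mem_image]
    rintro _ ⟨m, -, rfl⟩ ⟨m', -, h⟩
    exact hcc' (Prod.mk.inj h).2.symm

section Rows

variable {W : Set (ℝ × ℝ)}

lemma convex_row (hW : Convex ℝ W) (c : ℝ) : Convex ℝ (row W c) := by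
  intro x hx y hy a b ha hb hab
  show (a • x + b • y, c) ∈ W
  convert hW hx hy ha hb hab using 1
  simp [← add_mul, hab]

lemma isCompact_row (hW : IsCompact W) (c : ℝ) : IsCompact (row W c) := by
  have : row W c = Prod.fst '' (W ∩ {p | p.2 = c}) := by
    ext r
    refine ⟨fun h => ⟨(r, c), ⟨h, rfl⟩, rfl⟩, ?_⟩
    rintro ⟨⟨r, c⟩, ⟨h, rfl⟩, rfl⟩
    exact h
  rw [this]
  exact (hW.inter_right (isClosed_eq continuous_snd continuous_const)).image continuous_fst

lemma exists_row_eq_Icc (hc : IsCompact W) (hcv : Convex ℝ W) {c : ℝ} (hne : (row W c).Nonempty) :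
    ∃ a b, a ≤ b ∧ row W c = Icc a b := by
  have h := eq_Icc_of_connected_compact ((convex_row hcv c).isConnected hne) (isCompact_row hc c)
  exact ⟨_, _, nonempty_Icc.mp (h ▸ hne), h⟩

lemma finite_setOf_row_nonempty (hW : IsCompact W) : {c : ℤ | (row W c).Nonempty}.Finite := by
  refine ((Int.isClosedEmbedding_coe_real.isCompact_preimage
    (hW.image continuous_snd)).finite_of_discrete).subset ?_
  rintro c ⟨r, hr⟩
  exact ⟨(r, c), hr, rfl⟩

lemma row_add_segment (W : Set (ℝ × ℝ)) {g : ℝ} (hg : 0 ≤ g) (c : ℝ) :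
    row (W + segment ℝ 0 (g, 0)) c = row W c + Icc 0 g := by
  have hseg : segment ℝ (0 : ℝ × ℝ) (g, 0) = (fun s => (s, 0)) '' Icc 0 g := by
    have h := image_segment ℝ (LinearMap.inl ℝ ℝ ℝ).toAffineMap 0 g
    simp only [LinearMap.coe_toAffineMap, LinearMap.inl_apply, map_zero] at h
    rw [← segment_eq_Icc hg, ← h]
    rfl
  ext r
  simp only [row, hseg, mem_preimage, mem_add, mem_image]
  constructor
  · rintro ⟨w, hw, _, ⟨s, hs, rfl⟩, h⟩
    obtain ⟨rfl, rfl⟩ : w.1 + s = r ∧ w.2 + 0 = c := Prod.mk.inj h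
    exact ⟨w.1, by simpa using hw, s, hs, rfl⟩
  · rintro ⟨x, hx, s, hs, rfl⟩
    exact ⟨(x, c), hx, (s, 0), ⟨s, hs, rfl⟩, by simp⟩

lemma scaledCount_eq_sum_rowCount_of_isCompact (hc : IsCompact W) (hcv : Convex ℝ W) {N : ℕ}
    (hN : 0 < N) :
    scaledCount W N = ∑ c ∈ (finite_setOf_row_nonempty hc).toFinset, rowCount (row W c) N := by
  have hfin := finite_setOf_row_nonempty hc
  refine scaledCount_eq_sum_rowCount _ (fun c hne => hfin.mem_toFinset.mpr hne) fun c hcS => ?_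
  obtain ⟨a, b, -, h⟩ := exists_row_eq_Icc hc hcv (hfin.mem_toFinset.mp hcS)
  exact h ▸ finite_setOf_div_mem_Icc hN _ _

lemma scaledCount_add_segment (hc : IsCompact W) (hcv : Convex ℝ W) (g : ℕ) {N : ℕ} (hN : 0 < N) :
    scaledCount (W + segment ℝ 0 ((g : ℝ), 0)) N = scaledCount W N + rowsMet W * (N * g) := by
  have hfin := finite_setOf_row_nonempty hc
  have hrow (c : ℤ) (hcS : c ∈ hfin.toFinset) : ∃ a b, a ≤ b ∧ row W c = Icc a b :=
    exists_row_eq_Icc hc hcv (hfin.mem_toFinset.mp hcS)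
  have hWg : scaledCount (W + segment ℝ 0 ((g : ℝ), 0)) N
      = ∑ c ∈ hfin.toFinset, rowCount (row W c + Icc 0 (g : ℝ)) N := by
    simp only [← row_add_segment W (Nat.cast_nonneg g)]
    refine scaledCount_eq_sum_rowCount _ (fun c hne => ?_) fun c hcS => ?_
    · rw [row_add_segment W (Nat.cast_nonneg g)] at hne
      exact hfin.mem_toFinset.mpr (by simpa [Set.add_nonempty] using hne)
    · obtain ⟨a, b, hab, hab'⟩ := hrow c hcS
      rw [row_add_segment W (Nat.cast_nonneg g), hab', Icc_add_Icc hab (Nat.cast_nonneg g)]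
      exact finite_setOf_div_mem_Icc hN _ _
  rw [hWg, scaledCount_eq_sum_rowCount_of_isCompact hc hcv hN, rowsMet,
    ncard_eq_toFinset_card _ hfin, ← smul_eq_mul, ← Finset.sum_const, ← Finset.sum_add_distrib]
  refine Finset.sum_congr rfl fun c hcS => ?_
  obtain ⟨a, b, hab, hab'⟩ := hrow c hcS
  rw [hab', rowCount_Icc_add_Icc hN hab]

end Rows

/-- The abscissa at which the line through `i` and `j` meets the horizontal line at height `c`. -/
def crossing (i j : ℝ × ℝ) (c : ℝ) : ℝ := ((j.2 - c) * i.1 + (c - i.2) * j.1) / (j.2 - i.2)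

lemma crossing_mem_row_convexHull {T : Set (ℝ × ℝ)} {i j : ℝ × ℝ} (hi : i ∈ T) (hj : j ∈ T)
    {c : ℝ} (hic : i.2 < c) (hcj : c < j.2) : crossing i j c ∈ row (convexHull ℝ T) c := by
  have hd : 0 < j.2 - i.2 := by linarith
  refine segment_subset_convexHull hi hj ⟨(j.2 - c) / (j.2 - i.2), (c - i.2) / (j.2 - i.2),
    div_nonneg (by linarith) hd.le, div_nonneg (by linarith) hd.le, ?_, ?_⟩
  · field_simp
    ring
  · refine Prod.ext ?_ ?_
    · simp only [crossing, Prod.fst_add, Prod.smul_fst, smul_eq_mul]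
      field_simp
    · simp only [Prod.snd_add, Prod.smul_snd, smul_eq_mul]
      field_simp
      ring

/-- `z` is cut off by a line `σ x + μ y = σ z.1 + μ z.2`: the points of `T` below the line
`y = z.2` bound `μ` from below, those above bound it from above, and `hcross` says precisely
that these bounds are compatible. -/
lemma notMem_convexHull_of_crossing_lt (T : Finset (ℝ × ℝ)) (z : ℝ × ℝ) (σ : ℝ)
    (hon : ∀ y ∈ T, y.2 = z.2 → σ * y.1 < σ * z.1)
    (hcross : ∀ i ∈ T, ∀ j ∈ T, i.2 < z.2 → z.2 < j.2 → σ * crossing i j z.2 < σ * z.1) :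
    z ∉ convexHull ℝ (T : Set (ℝ × ℝ)) := by
  obtain ⟨μ, hlo, hhi⟩ := Order.exists_between_finsets
    ((T.filter (·.2 < z.2)).image fun y => (σ * y.1 - σ * z.1) / (z.2 - y.2))
    ((T.filter (z.2 < ·.2)).image fun y => (σ * z.1 - σ * y.1) / (y.2 - z.2)) (by
      simp only [Finset.mem_image, Finset.mem_filter]
      rintro _ ⟨i, ⟨hi, hic⟩, rfl⟩ _ ⟨j, ⟨hj, hcj⟩, rfl⟩
      have h := hcross i hi j hj hic hcj
      rw [crossing, mul_div_assoc', div_lt_iff₀ (by linarith)] at h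
      rw [div_lt_div_iff₀ (by linarith) (by linarith)]
      linarith)
  have hsub : (T : Set (ℝ × ℝ)) ⊆ {p | σ * p.1 + μ * p.2 < σ * z.1 + μ * z.2} := by
    intro y hy
    rcases lt_trichotomy y.2 z.2 with h | h | h
    · have := hlo _ (Finset.mem_image_of_mem _ (Finset.mem_filter.mpr ⟨hy, h⟩))
      rw [div_lt_iff₀ (by linarith)] at this
      simp only [mem_ofPred_eq]
      linarith
    · simp only [mem_ofPred_eq, h]
      linarith [hon y hy h]
    · have := hhi _ (Finset.mem_image_of_mem _ (Finset.mem_filter.mpr ⟨hy, h⟩))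
      rw [lt_div_iff₀ (by linarith)] at this
      simp only [mem_ofPred_eq]
      linarith
  have hconv : Convex ℝ {p : ℝ × ℝ | σ * p.1 + μ * p.2 < σ * z.1 + μ * z.2} :=
    convex_halfSpace_lt ((σ • LinearMap.fst ℝ ℝ ℝ + μ • LinearMap.snd ℝ ℝ ℝ).isLinear) _
  exact fun hz => lt_irrefl (σ * z.1 + μ * z.2) (convexHull_min hsub hconv hz)

/-- An irrational extreme point of the row would lie strictly beyond all the rational candidates:
the points of `T` on the line and the crossings of the line by segments between points of `T`. -/
lemma exists_ratCast_eq_of_extreme_row {T : Finset (ℝ × ℝ)} (hT : ∀ p ∈ T, IsIntPt p) {c : ℤ}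
    {b σ : ℝ} (hσ : σ ≠ 0) (hb : b ∈ row (convexHull ℝ ↑T) c)
    (hmax : ∀ r ∈ row (convexHull ℝ ↑T) c, σ * r ≤ σ * b) : ∃ q : ℚ, (q : ℝ) = b := by
  by_contra! hq
  have hlt (r : ℝ) (hr : r ∈ row (convexHull ℝ ↑T) c) (q : ℚ) (hqr : (q : ℝ) = r) :
      σ * r < σ * b :=
    (hmax r hr).lt_of_ne fun h => hq q (hqr.trans (mul_left_cancel₀ hσ h))
  refine notMem_convexHull_of_crossing_lt T (b, c) σ (fun y hy hyc => ?_)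
    (fun i hi j hj hic hcj => ?_) hb
  · obtain ⟨m, k, rfl⟩ := hT y hy
    obtain rfl : k = c := Int.cast_injective (α := ℝ) hyc
    exact hlt m (subset_convexHull ℝ _ hy) m (Rat.cast_intCast m)
  · obtain ⟨m, k, rfl⟩ := hT i hi
    obtain ⟨m', k', rfl⟩ := hT j hj
    refine hlt _ (crossing_mem_row_convexHull hi hj hic hcj)
      (((k' - c) * m + (c - k) * m') / (k' - k)) ?_
    simp [crossing]

lemma isAffineOnMultiples_scaledCount {T : Finset (ℝ × ℝ)} (hT : ∀ p ∈ T, IsIntPt p) :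
    IsAffineOnMultiples (fun N => scaledCount (convexHull ℝ ↑T) N)
      (rowsMet (convexHull ℝ ↑T)) := by
  set W := convexHull ℝ (T : Set (ℝ × ℝ))
  have hc : IsCompact W := T.finite_toSet.isCompact_convexHull ℝ
  have hcv : Convex ℝ W := convex_convexHull ℝ _
  have hfin := finite_setOf_row_nonempty hc
  have hcard : (rowsMet W : ℚ) = ∑ _c ∈ hfin.toFinset, (1 : ℚ) := by
    simp [rowsMet, ncard_eq_toFinset_card _ hfin]
  rw [hcard]
  refine IsAffineOnMultiples.sum hfin.toFinset (f := fun c N => rowCount (row W c) N)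
    (h := fun _ => 1) (F := fun N => scaledCount W N) (fun c hcS => ?_)
    fun N hN => by rw [scaledCount_eq_sum_rowCount_of_isCompact hc hcv hN, Nat.cast_sum]
  obtain ⟨a, b, hab, h⟩ := exists_row_eq_Icc hc hcv (hfin.mem_toFinset.mp hcS)
  have ha := exists_ratCast_eq_of_extreme_row hT (σ := -1) (by norm_num)
    (h ▸ left_mem_Icc.mpr hab) fun r hr => by rw [h] at hr; linarith [hr.1]
  have hb := exists_ratCast_eq_of_extreme_row hT (σ := 1) one_ne_zero
    (h ▸ right_mem_Icc.mpr hab) fun r hr => by rw [h] at hr; linarith [hr.2]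
  obtain ⟨⟨qa, rfl⟩, ⟨qb, rfl⟩⟩ := And.intro ha hb
  simp only [h]
  exact isAffineOnMultiples_rowCount_Icc (by exact_mod_cast hab)

lemma exists_unimodular_apply_eq_gcd (s₁ s₂ : ℤ) :
    ∃ a b c d : ℤ, a * d - b * c = 1 ∧ a * s₁ + b * s₂ = Int.gcd s₁ s₂ ∧ c * s₁ + d * s₂ = 0 := by
  rcases Nat.eq_zero_or_pos (Int.gcd s₁ s₂) with hg | hg
  · obtain ⟨rfl, rfl⟩ := Int.gcd_eq_zero_iff.mp hg
    exact ⟨1, 0, 0, 1, by simp⟩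
  set g := Int.gcd s₁ s₂
  obtain ⟨u₁, hu₁⟩ : (g : ℤ) ∣ s₁ := Int.gcd_dvd_left s₁ s₂
  obtain ⟨u₂, hu₂⟩ : (g : ℤ) ∣ s₂ := Int.gcd_dvd_right s₁ s₂
  have hbez : (g : ℤ) = s₁ * Int.gcdA s₁ s₂ + s₂ * Int.gcdB s₁ s₂ := Int.gcd_eq_gcd_ab s₁ s₂
  refine ⟨Int.gcdA s₁ s₂, Int.gcdB s₁ s₂, -u₂, u₁, ?_, by rw [hbez]; ring,
    by linear_combination (-u₂) * hu₁ + u₁ * hu₂⟩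
  refine mul_left_cancel₀ (Int.natCast_ne_zero.mpr hg.ne') ?_
  linear_combination -hbez - Int.gcdA s₁ s₂ * hu₁ - Int.gcdB s₁ s₂ * hu₂

def unimodularEquiv (a b c d : ℤ) (h : a * d - b * c = 1) : Euc 2 ≃ₗ[ℝ] ℝ × ℝ where
  toFun x := (a * x 0 + b * x 1, c * x 0 + d * x 1)
  invFun p := !₂[d * p.1 - b * p.2, a * p.2 - c * p.1]
  map_add' x y := by simp only [PiLp.add_apply, Prod.mk_add_mk]; ring_nf
  map_smul' r x := by
    simp only [PiLp.smul_apply, smul_eq_mul, RingHom.id_apply, Prod.smul_mk]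
    ring_nf
  left_inv x := by
    have hR : (a : ℝ) * d - b * c = 1 := by exact_mod_cast h
    ext i
    fin_cases i
    · simp only [Fin.isValue, Fin.zero_eta, Matrix.cons_val_zero]
      linear_combination x 0 * hR
    · simp only [Fin.isValue, Fin.mk_one, Matrix.cons_val_one, Matrix.cons_val_fin_one]
      linear_combination x 1 * hR
  right_inv p := by
    have hR : (a : ℝ) * d - b * c = 1 := by exact_mod_cast h
    ext <;>
      simp only [Fin.isValue, Matrix.cons_val_zero, Matrix.cons_val_one, Matrix.cons_val_fin_one]
    · linear_combination p.1 * hR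
    · linear_combination p.2 * hR

lemma isZ_iff_isIntPt_unimodularEquiv {a b c d : ℤ} (h : a * d - b * c = 1) (x : Euc 2) :
    IsZ x ↔ IsIntPt (unimodularEquiv a b c d h x) := by
  constructor
  · intro hx
    obtain ⟨m₀, h₀⟩ := hx 0
    obtain ⟨m₁, h₁⟩ := hx 1
    exact ⟨a * m₀ + b * m₁, c * m₀ + d * m₁, by simp [unimodularEquiv, h₀, h₁]⟩
  · rintro ⟨m, k, hmk⟩
    rw [← (unimodularEquiv a b c d h).symm_apply_apply x, hmk]
    intro i
    fin_cases i
    · exact ⟨d * m - b * k, by simp [unimodularEquiv]⟩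
    · exact ⟨a * k - c * m, by simp [unimodularEquiv]⟩

lemma exists_linearEquiv_apply_eq {s : Euc 2} (hs : IsZ s) :
    ∃ Ψ : Euc 2 ≃ₗ[ℝ] ℝ × ℝ, (∀ x, IsZ x ↔ IsIntPt (Ψ x)) ∧ ∃ g : ℕ, Ψ s = ((g : ℝ), 0) := by
  obtain ⟨s₁, hs₁⟩ := hs 0
  obtain ⟨s₂, hs₂⟩ := hs 1
  obtain ⟨a, b, c, d, h, h₁, h₂⟩ := exists_unimodular_apply_eq_gcd s₁ s₂
  refine ⟨unimodularEquiv a b c d h, isZ_iff_isIntPt_unimodularEquiv h, Int.gcd s₁ s₂, ?_⟩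
  simp only [unimodularEquiv, LinearEquiv.coe_mk, LinearMap.coe_mk, AddHom.coe_mk, hs₁, hs₂,
    Prod.mk.injEq]
  exact ⟨by exact_mod_cast h₁, by exact_mod_cast h₂⟩

section Stretch

variable {Ψ : Euc 2 ≃ₗ[ℝ] ℝ × ℝ} {N : ℕ}

def stretchAlong (Ψ : Euc 2 ≃ₗ[ℝ] ℝ × ℝ) (N : ℕ) : Euc 2 →ₗ[ℝ] Euc 2 :=
  Ψ.symm.toLinearMap ∘ₗ ((N : ℝ) • LinearMap.id).prodMap LinearMap.id ∘ₗ Ψ.toLinearMap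

lemma stretchAlong_apply (x : Euc 2) : stretchAlong Ψ N x = Ψ.symm (N * (Ψ x).1, (Ψ x).2) := rfl

lemma stretchAlong_one : stretchAlong Ψ 1 = LinearMap.id := by
  ext1 x
  simp [stretchAlong_apply]

lemma injective_stretchAlong (hN : 0 < N) : Function.Injective (stretchAlong Ψ N) := by
  intro x y h
  obtain ⟨h₁, h₂⟩ := Prod.mk.inj (Ψ.symm.injective h)
  have hN' : (N : ℝ) ≠ 0 := by positivity
  exact Ψ.injective (Prod.ext (mul_left_cancel₀ hN' h₁) h₂)

lemma isZ_stretchAlong (hΨ : ∀ x, IsZ x ↔ IsIntPt (Ψ x)) {x : Euc 2} (hx : IsZ x) :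
    IsZ (stretchAlong Ψ N x) := by
  obtain ⟨m, k, hmk⟩ := (hΨ x).mp hx
  rw [hΨ, stretchAlong_apply, Ψ.apply_symm_apply, hmk]
  exact ⟨N * m, k, by push_cast; rfl⟩

lemma ncard_stretchAlong_image (hΨ : ∀ x, IsZ x ↔ IsIntPt (Ψ x)) (hN : 0 < N)
    (Y : Set (Euc 2)) :
    {x | x ∈ stretchAlong Ψ N '' Y ∧ IsZ x}.ncard = scaledCount (Ψ '' Y) N := by
  have hN' : (N : ℝ) ≠ 0 := by positivity
  have hset : {x | x ∈ stretchAlong Ψ N '' Y ∧ IsZ x}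
      = (fun p : ℤ × ℤ => Ψ.symm (p.1, p.2)) '' {p | ((p.1 : ℝ) / N, (p.2 : ℝ)) ∈ Ψ '' Y} := by
    ext x
    simp only [mem_ofPred_eq, mem_image]
    constructor
    · rintro ⟨⟨y, hy, rfl⟩, hZ⟩
      obtain ⟨m, k, hmk⟩ := (hΨ _).mp hZ
      rw [stretchAlong_apply, Ψ.apply_symm_apply, Prod.mk.injEq] at hmk
      refine ⟨(m, k), ⟨y, hy, Prod.ext ?_ hmk.2⟩, by rw [stretchAlong_apply, hmk.1, hmk.2]⟩
      rw [← hmk.1]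
      field_simp
    · rintro ⟨p, ⟨y, hy, hyp⟩, rfl⟩
      refine ⟨⟨y, hy, ?_⟩, (hΨ _).mpr ⟨p.1, p.2, Ψ.apply_symm_apply _⟩⟩
      rw [stretchAlong_apply, hyp]
      field_simp
  rw [hset, scaledCount, ncard_image_of_injective _ fun p q h => ?_]
  obtain ⟨h₁, h₂⟩ := Prod.mk.inj (Ψ.symm.injective h)
  exact Prod.ext (Int.cast_injective h₁) (Int.cast_injective h₂)

end Stretch

lemma image_add_segment_zero {E F : Type*} [AddCommGroup E] [Module ℝ E] [AddCommGroup F]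
    [Module ℝ F] (f : E →ₗ[ℝ] F) (X : Set E) (t : E) :
    f '' (X + segment ℝ 0 t) = f '' X + segment ℝ 0 (f t) := by
  rw [image_add, ← f.coe_toAffineMap, image_segment, f.coe_toAffineMap, map_zero]

lemma _root_.IsLatticePolytope.exists_image_eq_convexHull {n : ℕ} {X : Set (Euc n)}
    (hX : IsLatticePolytope X) (σ : Euc n →ₗ[ℝ] ℝ × ℝ) (hσ : ∀ x, IsZ x → IsIntPt (σ x)) :
    ∃ T : Finset (ℝ × ℝ), (∀ p ∈ T, IsIntPt p) ∧ σ '' X = convexHull ℝ ↑T := by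
  classical
  obtain ⟨S, -, hS, rfl⟩ := hX
  refine ⟨S.image σ, fun p hp => ?_, by rw [σ.image_convexHull, Finset.coe_image]⟩
  obtain ⟨x, hx, rfl⟩ := Finset.mem_image.mp hp
  exact hσ x (hS x hx)

end LatticeRows

open LatticeRows

theorem statement9_general (P Q P' Q' : Set (Euc 2)) (t : Euc 2)
    (hP' : IsLatticePolytope P') (hQ' : IsLatticePolytope Q')
    (ht : IsZ t)
    (hPP' : P = P' + segment ℝ 0 t) (hQQ' : Q = Q' + segment ℝ 0 t)
    (hUCF : SameUCF P Q) :
    SameUCF P' Q' := by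
  intro π hπ hπZ
  obtain ⟨Ψ, hΨ, g, hg⟩ := exists_linearEquiv_apply_eq (hπZ t ht)
  set σ := Ψ.toLinearMap ∘ₗ π
  have hσZ (x : Euc 2) (hx : IsZ x) : IsIntPt (σ x) := (hΨ _).mp (hπZ x hx)
  obtain ⟨TP, hTP, hσP⟩ := hP'.exists_image_eq_convexHull σ hσZ
  obtain ⟨TQ, hTQ, hσQ⟩ := hQ'.exists_image_eq_convexHull σ hσZ
  have hcount (X : Set (Euc 2)) {N : ℕ} (hN : 0 < N) :
      {x | x ∈ (stretchAlong Ψ N ∘ₗ π) '' X ∧ IsZ x}.ncard = scaledCount (σ '' X) N := by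
    rw [LinearMap.coe_comp, image_comp, ncard_stretchAlong_image hΨ hN, ← image_comp]
    rfl
  have hσseg (X : Set (Euc 2)) :
      σ '' (X + segment ℝ 0 t) = σ '' X + segment ℝ 0 ((g : ℝ), 0) := by
    rw [image_add_segment_zero, show σ t = ((g : ℝ), 0) from hg]
  have hcompact (T : Finset (ℝ × ℝ)) := T.finite_toSet.isCompact_convexHull ℝ
  have key := (isAffineOnMultiples_scaledCount hTP).apply_one_eq
    (isAffineOnMultiples_scaledCount hTQ) g fun N hN => by
      have h := hUCF (stretchAlong Ψ N ∘ₗ π) ((injective_stretchAlong hN).comp hπ)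
        fun x hx => isZ_stretchAlong hΨ (hπZ x hx)
      rw [hcount _ hN, hcount _ hN, hPP', hQQ', hσseg, hσseg, hσP, hσQ,
        scaledCount_add_segment (hcompact TP) (convex_convexHull ℝ _) g hN,
        scaledCount_add_segment (hcompact TQ) (convex_convexHull ℝ _) g hN] at h
      exact_mod_cast h
  have h₁ := hcount P' one_pos
  have h₂ := hcount Q' one_pos
  rw [stretchAlong_one, LinearMap.id_comp] at h₁ h₂
  rw [h₁, h₂, hσP, hσQ]
  exact_mod_cast key

/-- If the 2-dimensional lattice polygons `P = P' + [0,t]` and `Q = Q' + [0,t]`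
(Minkowski sums with the lattice segment `[0,t]`, `t ∈ ℤ²` nonzero) have the same
universal counting function, then so do `P'` and `Q'`. -/
theorem statement9 (P Q P' Q' : Set (Euc 2)) (t : Euc 2)
    (hP : IsLatticePolytope P) (hQ : IsLatticePolytope Q)
    (hP' : IsLatticePolytope P') (hQ' : IsLatticePolytope Q')
    (hPdim : (interior P).Nonempty) (hQdim : (interior Q).Nonempty)
    (hP'dim : (interior P').Nonempty) (hQ'dim : (interior Q').Nonempty)
    (ht : IsZ t) (ht0 : t ≠ 0)
    (hPP' : P = P' + segment ℝ 0 t) (hQQ' : Q = Q' + segment ℝ 0 t)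
    (hUCF : SameUCF P Q) :
    SameUCF P' Q' :=
  statement9_general P Q P' Q' t hP' hQ' ht hPP' hQQ' hUCF
end
end

section
/- Let X be the triangle with vertices (0,0), (2,0), (1,1) and let Y be the triangle with vertices (0,0), (1,1), (0,3) in ℝ². Set P = X + Y and Q = X + (−Y) (Minkowski sums, where −Y = {−y : y ∈ Y}). Then Area(P) = Area(Q), and P and Q have the same universal counting function. -/
open MeasureTheory Set Pointwise

noncomputable section

/-!
Both sums are computed explicitly: `P = X + Y` is the hexagon with vertices `(0,0), (2,0), (3,1),
(2,3), (1,4), (0,3)` and `Q = X + (-Y)` the pentagon with vertices `(2,0), (1,1), (-1,-1), (0,-3),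
(2,-3)`. Cut `P` along the line `y = 3`: the lower piece reflected through the lattice point `(1,0)`
and the upper triangle translated by `(0,-3)` reassemble `Q`. Reflections `x ↦ c - x` and
translations `x ↦ x + d` with `c, d ∈ ℤ²` preserve Lebesgue measure and every additive subgroup
`Λ ⊇ ℤ²`, in particular `Λ = π⁻¹(ℤ²)`, whose points in `P` are counted by `|π(P) ∩ ℤ²|`.
-/

section CutAndMove

variable {G : Type*} [AddCommGroup G]

/-- `P` cut along `H`: the piece `P ∩ H` is replaced by `c - (P ∩ H)` and the piece `P \ H`
by `(P \ H) - d`. -/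
def cutAndMove (P H : Set G) (c d : G) : Set G :=
  (c - ·) ⁻¹' (P ∩ H) ∪ (· + d) ⁻¹' (P \ H)

lemma encard_preimage_inter_addSubgroup (Λ : AddSubgroup G) (e : G ≃ G)
    (he : ∀ x, e x ∈ Λ ↔ x ∈ Λ) (A : Set G) :
    (e ⁻¹' A ∩ Λ).encard = (A ∩ Λ).encard := by
  have hpre : e ⁻¹' A ∩ Λ = e ⁻¹' (A ∩ Λ) := by ext x; simp [he]
  rw [hpre, encard_preimage_of_injective_subset_range e.injective (by simp)]

lemma encard_inter_cutAndMove (Λ : AddSubgroup G) {P H : Set G} {c d : G}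
    (hc : c ∈ Λ) (hd : d ∈ Λ) (hdisj : Disjoint ((c - ·) ⁻¹' (P ∩ H)) ((· + d) ⁻¹' (P \ H))) :
    (cutAndMove P H c d ∩ Λ).encard = (P ∩ Λ).encard := by
  have hP : P ∩ Λ = P ∩ H ∩ Λ ∪ (P \ H) ∩ Λ := by
    rw [← union_inter_distrib_right, inter_union_sdiff]
  rw [hP, cutAndMove, union_inter_distrib_right,
    encard_union_eq (hdisj.mono inter_subset_left inter_subset_left),
    encard_union_eq (disjoint_sdiff_inter.symm.mono inter_subset_left inter_subset_left)]
  congr 1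
  · exact encard_preimage_inter_addSubgroup Λ (Equiv.subLeft c)
      (fun x => by simp [sub_eq_add_neg, Λ.add_mem_cancel_left hc]) _
  · exact encard_preimage_inter_addSubgroup Λ (Equiv.addRight d)
      (fun x => by simp [Λ.add_mem_cancel_right hd]) _

lemma measure_cutAndMove [MeasurableSpace G] [MeasurableAdd G] [MeasurableNeg G]
    (μ : Measure G) [μ.IsAddLeftInvariant] [μ.IsAddRightInvariant] [μ.IsNegInvariant]
    {P H : Set G} (hP : MeasurableSet P) (hH : MeasurableSet H) (c d : G)
    (hdisj : Disjoint ((c - ·) ⁻¹' (P ∩ H)) ((· + d) ⁻¹' (P \ H))) :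
    μ (cutAndMove P H c d) = μ P := by
  have hreflect : (c - ·) ⁻¹' (P ∩ H) = Neg.neg ⁻¹' ((c + ·) ⁻¹' (P ∩ H)) := by
    ext x; simp [sub_eq_add_neg]
  rw [cutAndMove, measure_union hdisj ((hP.diff hH).preimage (measurable_add_const d)), hreflect,
    Measure.measure_preimage_neg, measure_preimage_add, measure_preimage_add_right,
    measure_inter_add_sdiff P hH]

end CutAndMove

def integerLattice (n : ℕ) : AddSubgroup (Euc n) where
  carrier := {x | IsZ x}
  zero_mem' i := ⟨0, by simp⟩
  add_mem' {x y} hx hy i := by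
    obtain ⟨a, ha⟩ := hx i
    obtain ⟨b, hb⟩ := hy i
    exact ⟨a + b, by simp [ha, hb]⟩
  neg_mem' {x} hx i := by
    obtain ⟨a, ha⟩ := hx i
    exact ⟨-a, by simp [ha]⟩

lemma sameUCF_of_encard_inter_eq {n : ℕ} {P Q : Set (Euc n)}
    (h : ∀ Λ : AddSubgroup (Euc n), integerLattice n ≤ Λ → (P ∩ Λ).encard = (Q ∩ Λ).encard) :
    SameUCF P Q := by
  intro π hinj hZ
  have hpre : ∀ S : Set (Euc n), {x | x ∈ π '' S ∧ IsZ x} = π '' (S ∩ π ⁻¹' {x | IsZ x}) :=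
    fun S => (image_inter_preimage π S _).symm
  rw [hpre, hpre, ncard_image_of_injective _ hinj, ncard_image_of_injective _ hinj, ncard_def,
    ncard_def]
  exact congrArg ENat.toNat (h ((integerLattice n).comap π.toAddMonoidHom) (fun x hx => hZ x hx))

lemma smul_add_smul_add_smul_mem_convexHull {E : Type*} [AddCommGroup E] [Module ℝ E]
    {s : Set E} {u v w : E} (hu : u ∈ s) (hv : v ∈ s) (hw : w ∈ s) {α β γ : ℝ}
    (hα : 0 ≤ α) (hβ : 0 ≤ β) (hγ : 0 ≤ γ) (hsum : α + β + γ = 1) :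
    α • u + β • v + γ • w ∈ convexHull ℝ s := by
  have hmem := (convex_convexHull ℝ s).sum_mem (t := Finset.univ) (w := ![α, β, γ]) (z := ![u, v, w])
    (by simp [Fin.forall_fin_succ, hα, hβ, hγ]) (by simp [Fin.sum_univ_three, hsum])
    (by simp [Fin.forall_fin_succ, subset_convexHull ℝ s hu, subset_convexHull ℝ s hv,
      subset_convexHull ℝ s hw])
  simpa [Fin.sum_univ_three] using hmem

lemma mem_convexHull_of_affine_coords {s : Set (Euc 2)} (a₀ a₁ b₀ b₁ c₀ c₁ : ℝ)
    (ha : !₂[a₀, a₁] ∈ s) (hb : !₂[b₀, b₁] ∈ s) (hc : !₂[c₀, c₁] ∈ s)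
    {x : Euc 2} (β γ : ℝ) (hβ : 0 ≤ β) (hγ : 0 ≤ γ) (hβγ : β + γ ≤ 1)
    (h₀ : x 0 = a₀ + β * (b₀ - a₀) + γ * (c₀ - a₀))
    (h₁ : x 1 = a₁ + β * (b₁ - a₁) + γ * (c₁ - a₁)) :
    x ∈ convexHull ℝ s := by
  convert smul_add_smul_add_smul_mem_convexHull ha hb hc (by linarith) hβ hγ
    (show 1 - β - γ + β + γ = 1 by ring)
  ext i
  fin_cases i
  · simp only [Fin.zero_eta, h₀, PiLp.add_apply, PiLp.smul_apply, Matrix.cons_val_zero, smul_eq_mul]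
    ring
  · simp only [Fin.mk_one, h₁, PiLp.add_apply, PiLp.smul_apply, Matrix.cons_val_one,
      Matrix.cons_val_fin_one, smul_eq_mul]
    ring

def halfPlane (a b c : ℝ) : Set (Euc 2) := {x | a * x 0 + b * x 1 ≤ c}

@[simp]
lemma mem_halfPlane {a b c : ℝ} {x : Euc 2} : x ∈ halfPlane a b c ↔ a * x 0 + b * x 1 ≤ c :=
  Iff.rfl

lemma convex_halfPlane (a b c : ℝ) : Convex ℝ (halfPlane a b c) :=
  convex_halfSpace_le ⟨fun x y => by simp; ring, fun r x => by simp; ring⟩ c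

lemma isClosed_halfPlane (a b c : ℝ) : IsClosed (halfPlane a b c) :=
  isClosed_le (by fun_prop) continuous_const

/-- The hexagon with vertices `(0,0), (2,0), (3,1), (2,3), (1,4), (0,3)`. -/
def hexagon : Set (Euc 2) :=
  halfPlane 0 (-1) 0 ∩ halfPlane 1 (-1) 2 ∩ halfPlane 2 1 7 ∩ halfPlane 1 1 5 ∩
    halfPlane (-1) 1 3 ∩ halfPlane (-1) 0 0

/-- The pentagon with vertices `(2,0), (1,1), (-1,-1), (0,-3), (2,-3)`. -/
def pentagon : Set (Euc 2) :=
  halfPlane (-2) (-1) 3 ∩ halfPlane 0 (-1) 3 ∩ halfPlane 1 0 2 ∩ halfPlane 1 1 2 ∩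
    halfPlane (-1) 1 0

lemma convex_hexagon : Convex ℝ hexagon := by
  simp only [hexagon]
  repeat apply Convex.inter _ (convex_halfPlane _ _ _)
  exact convex_halfPlane _ _ _

lemma convex_pentagon : Convex ℝ pentagon := by
  simp only [pentagon]
  repeat apply Convex.inter _ (convex_halfPlane _ _ _)
  exact convex_halfPlane _ _ _

lemma isClosed_hexagon : IsClosed hexagon := by
  simp only [hexagon]
  repeat apply IsClosed.inter _ (isClosed_halfPlane _ _ _)
  exact isClosed_halfPlane _ _ _

lemma hexagon_subset_convexHull :
    hexagon ⊆ convexHull ℝ {!₂[0, 0], !₂[2, 0], !₂[3, 1], !₂[2, 3], !₂[1, 4], !₂[0, 3]} := by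
  intro x hx
  simp only [hexagon, mem_inter_iff, mem_halfPlane] at hx
  obtain ⟨⟨⟨⟨⟨h₁, h₂⟩, h₃⟩, h₄⟩, h₅⟩, h₆⟩ := hx
  rcases le_or_gt (3 * x 1) (x 0) with hc₁ | hc₁
  · exact mem_convexHull_of_affine_coords 0 0 2 0 3 1 (by simp) (by simp) (by simp)
      ((x 0 - 3 * x 1) / 2) (x 1) (by linarith) (by linarith) (by linarith) (by ring) (by ring)
  rcases le_or_gt (2 * x 1) (3 * x 0) with hc₂ | hc₂
  · exact mem_convexHull_of_affine_coords 0 0 3 1 2 3 (by simp) (by simp) (by simp)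
      ((3 * x 0 - 2 * x 1) / 7) ((3 * x 1 - x 0) / 7) (by linarith) (by linarith) (by linarith)
      (by ring) (by ring)
  rcases le_or_gt (x 1) (4 * x 0) with hc₃ | hc₃
  · exact mem_convexHull_of_affine_coords 0 0 2 3 1 4 (by simp) (by simp) (by simp)
      ((4 * x 0 - x 1) / 5) ((2 * x 1 - 3 * x 0) / 5) (by linarith) (by linarith) (by linarith)
      (by ring) (by ring)
  · exact mem_convexHull_of_affine_coords 0 0 1 4 0 3 (by simp) (by simp) (by simp)
      (x 0) ((x 1 - 4 * x 0) / 3) (by linarith) (by linarith) (by linarith) (by ring) (by ring)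

lemma pentagon_subset_convexHull :
    pentagon ⊆ convexHull ℝ {!₂[2, 0], !₂[1, 1], !₂[-1, -1], !₂[0, -3], !₂[2, -3]} := by
  intro x hx
  simp only [pentagon, mem_inter_iff, mem_halfPlane] at hx
  obtain ⟨⟨⟨⟨h₁, h₂⟩, h₃⟩, h₄⟩, h₅⟩ := hx
  rcases le_or_gt (x 0 - 2) (3 * x 1) with hc₁ | hc₁
  · exact mem_convexHull_of_affine_coords 2 0 1 1 (-1) (-1) (by simp) (by simp) (by simp)
      ((2 - x 0 + 3 * x 1) / 4) ((2 - x 0 - x 1) / 4) (by linarith) (by linarith) (by linarith)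
      (by ring) (by ring)
  rcases le_or_gt (3 * x 0 - 6) (2 * x 1) with hc₂ | hc₂
  · exact mem_convexHull_of_affine_coords 2 0 (-1) (-1) 0 (-3) (by simp) (by simp) (by simp)
      ((6 - 3 * x 0 + 2 * x 1) / 7) ((x 0 - 3 * x 1 - 2) / 7) (by linarith) (by linarith)
      (by linarith) (by ring) (by ring)
  · exact mem_convexHull_of_affine_coords 2 0 0 (-3) 2 (-3) (by simp) (by simp) (by simp)
      ((2 - x 0) / 2) ((3 * x 0 - 2 * x 1 - 6) / 6) (by linarith) (by linarith) (by linarith)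
      (by ring) (by ring)

lemma convexHull_add_convexHull_eq_hexagon :
    convexHull ℝ {!₂[0, 0], !₂[2, 0], !₂[1, 1]} + convexHull ℝ {!₂[0, 0], !₂[1, 1], !₂[0, 3]} =
      hexagon := by
  rw [← convexHull_add]
  refine Subset.antisymm (convexHull_min ?_ convex_hexagon)
    (hexagon_subset_convexHull.trans (convexHull_mono ?_))
  · rintro _ ⟨a, ha, b, hb, rfl⟩
    simp only [mem_insert_iff, mem_singleton_iff] at ha hb
    rcases ha with rfl | rfl | rfl <;> rcases hb with rfl | rfl | rfl <;> norm_num [hexagon]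
  · rintro _ (rfl | rfl | rfl | rfl | rfl | rfl)
    · exact ⟨!₂[0, 0], by simp, !₂[0, 0], by simp, by ext i; fin_cases i <;> norm_num⟩
    · exact ⟨!₂[2, 0], by simp, !₂[0, 0], by simp, by ext i; fin_cases i <;> norm_num⟩
    · exact ⟨!₂[2, 0], by simp, !₂[1, 1], by simp, by ext i; fin_cases i <;> norm_num⟩
    · exact ⟨!₂[2, 0], by simp, !₂[0, 3], by simp, by ext i; fin_cases i <;> norm_num⟩
    · exact ⟨!₂[1, 1], by simp, !₂[0, 3], by simp, by ext i; fin_cases i <;> norm_num⟩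
    · exact ⟨!₂[0, 0], by simp, !₂[0, 3], by simp, by ext i; fin_cases i <;> norm_num⟩

lemma convexHull_add_neg_convexHull_eq_pentagon :
    convexHull ℝ {!₂[0, 0], !₂[2, 0], !₂[1, 1]} + -convexHull ℝ {!₂[0, 0], !₂[1, 1], !₂[0, 3]} =
      pentagon := by
  have hneg : -({!₂[0, 0], !₂[1, 1], !₂[0, 3]} : Set (Euc 2)) =
      {!₂[0, 0], !₂[-1, -1], !₂[0, -3]} := by
    simp [← WithLp.toLp_neg]
  rw [← convexHull_neg, hneg, ← convexHull_add]
  refine Subset.antisymm (convexHull_min ?_ convex_pentagon)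
    (pentagon_subset_convexHull.trans (convexHull_mono ?_))
  · rintro _ ⟨a, ha, b, hb, rfl⟩
    simp only [mem_insert_iff, mem_singleton_iff] at ha hb
    rcases ha with rfl | rfl | rfl <;> rcases hb with rfl | rfl | rfl <;> norm_num [pentagon]
  · rintro _ (rfl | rfl | rfl | rfl | rfl)
    · exact ⟨!₂[2, 0], by simp, !₂[0, 0], by simp, by ext i; fin_cases i <;> norm_num⟩
    · exact ⟨!₂[1, 1], by simp, !₂[0, 0], by simp, by ext i; fin_cases i <;> norm_num⟩
    · exact ⟨!₂[0, 0], by simp, !₂[-1, -1], by simp, by ext i; fin_cases i <;> norm_num⟩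
    · exact ⟨!₂[0, 0], by simp, !₂[0, -3], by simp, by ext i; fin_cases i <;> norm_num⟩
    · exact ⟨!₂[2, 0], by simp, !₂[0, -3], by simp, by ext i; fin_cases i <;> norm_num⟩

lemma disjoint_hexagon_pieces_moved :
    Disjoint ((!₂[2, 0] - ·) ⁻¹' (hexagon ∩ halfPlane 0 1 3))
      ((· + !₂[0, 3]) ⁻¹' (hexagon \ halfPlane 0 1 3)) := by
  rw [disjoint_left]
  intro w hlow hup
  simp only [hexagon, mem_preimage, mem_inter_iff, mem_sdiff, mem_halfPlane, PiLp.sub_apply,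
    PiLp.add_apply, Matrix.cons_val_zero, Matrix.cons_val_one, Matrix.cons_val_fin_one] at hlow hup
  linarith [hlow.1.1.1.1.1.1, hup.2]

lemma pentagon_eq_cutAndMove_hexagon :
    pentagon = cutAndMove hexagon (halfPlane 0 1 3) !₂[2, 0] !₂[0, 3] := by
  ext w
  simp only [cutAndMove, pentagon, hexagon, mem_union, mem_preimage, mem_inter_iff, mem_sdiff,
    mem_halfPlane, PiLp.sub_apply, PiLp.add_apply, Matrix.cons_val_zero, Matrix.cons_val_one,
    Matrix.cons_val_fin_one]
  grind

lemma isZ_vec2 (a b : ℤ) : IsZ (!₂[(a : ℝ), b] : Euc 2) := by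
  intro i
  fin_cases i
  exacts [⟨a, rfl⟩, ⟨b, rfl⟩]

/-- For the triangles `X = conv{(0,0),(2,0),(1,1)}` and `Y = conv{(0,0),(1,1),(0,3)}`,
the Minkowski sums `P = X + Y` and `Q = X + (−Y)` have equal areas and the same
universal counting function. -/
theorem statement11 (X Y Pp Qq : Set (Euc 2))
    (hX : X = convexHull ℝ {!₂[0, 0], !₂[2, 0], !₂[1, 1]})
    (hY : Y = convexHull ℝ {!₂[0, 0], !₂[1, 1], !₂[0, 3]})
    (hPp : Pp = X + Y) (hQq : Qq = X + (-Y)) :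
    (volume Pp).toReal = (volume Qq).toReal ∧ SameUCF Pp Qq := by
  rw [hPp, hQq, hX, hY, convexHull_add_convexHull_eq_hexagon,
    convexHull_add_neg_convexHull_eq_pentagon, pentagon_eq_cutAndMove_hexagon]
  refine ⟨?_, sameUCF_of_encard_inter_eq fun Λ hΛ => ?_⟩
  · rw [measure_cutAndMove volume isClosed_hexagon.measurableSet
      (isClosed_halfPlane 0 1 3).measurableSet _ _ disjoint_hexagon_pieces_moved]
  · have hc : (!₂[2, 0] : Euc 2) ∈ Λ := hΛ (by exact_mod_cast isZ_vec2 2 0)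
    have hd : (!₂[0, 3] : Euc 2) ∈ Λ := hΛ (by exact_mod_cast isZ_vec2 0 3)
    rw [encard_inter_cutAndMove Λ hc hd disjoint_hexagon_pieces_moved]
end
end
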